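/- arXiv:1403.3201 — 2 statements merged into one kernel-verified Lean document; each statement's English description precedes it below -/
import Mathlib

section
/- Let f ∈ C¹[a,b] have a derivative f' with finitely many zeros, and let g ∈ C¹[a,b] with g' > 0 on [a,b]. For every δ > 0 there exists a positive integer r such that for every n and every n-partition Δ of [a,b], (n + r)^{1/2} · (∫ₐᵇ f dg − LS(f,g,Δ))^{1/2} ≥ (1/√2) ∫ₐᵇ √(|f'(t)| g'(t)) dt − δ(b − a), where LS(f,g,Δ) is the lower Riemann–Stieltjes sum of f with respect to g over Δ. -/
/-!
Split `∫ f dg - LS(f, g, Δ)` into the contributions `lowerGap f g' u v` of the cells `[u, v]`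
of `Δ`. On a cell where `|f'| ≥ p` and `g' ≥ q`, either `p ≤ 0` or `f'` has constant sign, so
`f - min f` grows at least like `p` times the distance to an endpoint, whence
`p q (v - u)² ≤ 2 lowerGap f g' u v`. By uniform continuity, on cells shorter than some `η` the
integrand `√(|f'| g')` stays within `√2 δ` of `√(p q)` for the minima `p` of `|f'|` and `q` of
`g'`, so `∫ √(|f'| g') ≤ √(2 lowerGap) + √2 δ (v - u)` there. Cutting every cell of `Δ` into
`⌈(v - u) / η⌉` equal pieces only decreases the gaps, and Cauchy–Schwarz over the
`n + ⌈(b - a) / η⌉` pieces in total gives the estimate.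
-/

open Set MeasureTheory

noncomputable def lowerGap (f g' : ℝ → ℝ) (u v : ℝ) : ℝ :=
  ∫ s in u..v, (f s - sInf (f '' Icc u v)) * g' s

theorem Icc_subset_Icc_of_monotoneOn_Iic {w : ℕ → ℝ} {N i : ℕ} (hw : MonotoneOn w (Iic N))
    (hi : i < N) : Icc (w i) (w (i + 1)) ⊆ Icc (w 0) (w N) :=
  Icc_subset_Icc (hw (mem_Iic.2 (Nat.zero_le N)) (mem_Iic.2 hi.le) (Nat.zero_le i))
    (hw (mem_Iic.2 hi) (mem_Iic.2 le_rfl) hi)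

theorem sum_ceil_sub_div_le {t : ℕ → ℝ} {n : ℕ} {η : ℝ} (hη : 0 < η)
    (ht : ∀ i < n, t i ≤ t (i + 1)) :
    ∑ i ∈ Finset.range n, (⌈(t (i + 1) - t i) / η⌉₊ : ℝ) ≤ n + (t n - t 0) / η :=
  calc ∑ i ∈ Finset.range n, (⌈(t (i + 1) - t i) / η⌉₊ : ℝ)
      ≤ ∑ i ∈ Finset.range n, ((t (i + 1) - t i) / η + 1) :=
        Finset.sum_le_sum fun i hi => (Nat.ceil_lt_add_one
          (div_nonneg (sub_nonneg.2 (ht i (Finset.mem_range.1 hi))) hη.le)).le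
    _ = n + (t n - t 0) / η := by
      rw [Finset.sum_add_distrib, ← Finset.sum_div, Finset.sum_range_sub]
      simp only [Finset.sum_const, Finset.card_range, nsmul_eq_mul, mul_one]
      ring

theorem exists_monotone_partition_ceil {u v η : ℝ} (huv : u < v) (hη : 0 < η) :
    ∃ w : ℕ → ℝ, Monotone w ∧ w 0 = u ∧ w ⌈(v - u) / η⌉₊ = v ∧ ∀ j, w (j + 1) - w j ≤ η := by
  set K := ⌈(v - u) / η⌉₊
  have hK : (0 : ℝ) < K := Nat.cast_pos.2 (Nat.ceil_pos.2 (div_pos (sub_pos.2 huv) hη))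
  have hL : 0 ≤ (v - u) / K := div_nonneg (sub_nonneg.2 huv.le) hK.le
  refine ⟨fun j => u + j * ((v - u) / K), fun i j hij => by simp only; gcongr, by simp,
    by field_simp; ring, fun j => ?_⟩
  simp only [Nat.cast_succ, add_one_mul, add_sub_add_left_eq_sub, add_sub_cancel_left]
  rw [div_le_iff₀ hK, ← div_le_iff₀' hη]
  exact Nat.le_ceil _

theorem integral_le_sqrt_sum_mul_sqrt_sum_add {h : ℝ → ℝ} {w k e : ℕ → ℝ} {N : ℕ} {c : ℝ}
    (hint : ∀ i < N, IntervalIntegrable h volume (w i) (w (i + 1)))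
    (hk : ∀ i < N, 0 ≤ k i) (he : ∀ i < N, 0 ≤ e i)
    (hcell : ∀ i < N, ∫ s in w i..w (i + 1), h s ≤ √(k i) * √(e i) + c * (w (i + 1) - w i)) :
    ∫ s in w 0..w N, h s ≤
      √(∑ i ∈ Finset.range N, k i) * √(∑ i ∈ Finset.range N, e i) + c * (w N - w 0) := by
  have hsq : ∀ x : ℕ → ℝ, (∀ i < N, 0 ≤ x i) →
      ∑ i ∈ Finset.range N, √(x i) ^ 2 = ∑ i ∈ Finset.range N, x i := fun x hx =>
    Finset.sum_congr rfl fun i hi => Real.sq_sqrt (hx i (Finset.mem_range.1 hi))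
  rw [← intervalIntegral.sum_integral_adjacent_intervals hint]
  calc ∑ i ∈ Finset.range N, ∫ s in w i..w (i + 1), h s
      ≤ ∑ i ∈ Finset.range N, (√(k i) * √(e i) + c * (w (i + 1) - w i)) :=
        Finset.sum_le_sum fun i hi => hcell i (Finset.mem_range.1 hi)
    _ = ∑ i ∈ Finset.range N, √(k i) * √(e i) + c * (w N - w 0) := by
      rw [Finset.sum_add_distrib, ← Finset.mul_sum, Finset.sum_range_sub]
    _ ≤ _ := by
      grw [Real.sum_mul_le_sqrt_mul_sqrt, hsq k hk, hsq e he]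

section

variable {a b u v p q c : ℝ} {f f' g g' : ℝ → ℝ}

theorem integral_eq_sub_of_hasDerivWithinAt_Icc (huv : u ≤ v)
    (hg : ∀ x ∈ Icc u v, HasDerivWithinAt g (g' x) (Icc u v) x)
    (hg' : ContinuousOn g' (Icc u v)) : ∫ x in u..v, g' x = g v - g u :=
  intervalIntegral.integral_eq_sub_of_hasDerivAt_of_le huv
    (fun x hx => (hg x hx).continuousWithinAt)
    (fun x hx => (hg x (Ioo_subset_Icc_self hx)).hasDerivAt (Icc_mem_nhds hx.1 hx.2))
    (hg'.intervalIntegrable_of_Icc huv)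

theorem lowerGap_nonneg (huv : u ≤ v) (hf : ContinuousOn f (Icc u v))
    (hg'0 : ∀ x ∈ Icc u v, 0 ≤ g' x) : 0 ≤ lowerGap f g' u v :=
  intervalIntegral.integral_nonneg huv fun s hs =>
    mul_nonneg (sub_nonneg.2 (hf.sInf_image_Icc_le hs)) (hg'0 s hs)

theorem lowerGap_eq_integral_sub_sInf_mul (huv : u ≤ v) (hf : ContinuousOn f (Icc u v))
    (hg : ∀ x ∈ Icc u v, HasDerivWithinAt g (g' x) (Icc u v) x)
    (hg' : ContinuousOn g' (Icc u v)) :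
    lowerGap f g' u v = (∫ s in u..v, f s * g' s) - sInf (f '' Icc u v) * (g v - g u) := by
  have hfg : IntervalIntegrable (fun s => f s * g' s) volume u v :=
    (hf.mul hg').intervalIntegrable_of_Icc huv
  have hmg : IntervalIntegrable (fun s => sInf (f '' Icc u v) * g' s) volume u v :=
    (continuousOn_const.mul hg').intervalIntegrable_of_Icc huv
  rw [lowerGap, ← integral_eq_sub_of_hasDerivWithinAt_Icc huv hg hg',
    ← intervalIntegral.integral_const_mul, ← intervalIntegral.integral_sub hfg hmg]
  simp only [sub_mul]

theorem mul_sub_le_sub_of_le_hasDerivWithinAt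
    (hf : ∀ x ∈ Icc u v, HasDerivWithinAt f (f' x) (Icc u v) x)
    (hp : ∀ x ∈ Icc u v, p ≤ f' x) {x y : ℝ} (hx : x ∈ Icc u v) (hy : y ∈ Icc u v)
    (hxy : x ≤ y) : p * (y - x) ≤ f y - f x := by
  have hderiv : ∀ z ∈ Ioo u v, HasDerivAt f (f' z) z := fun z hz =>
    (hf z (Ioo_subset_Icc_self hz)).hasDerivAt (Icc_mem_nhds hz.1 hz.2)
  refine (convex_Icc u v).mul_sub_le_image_sub_of_le_deriv
    (fun z hz => (hf z hz).continuousWithinAt) ?_ ?_ x hx y hy hxy <;> rw [interior_Icc]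
  · exact fun z hz => (hderiv z hz).differentiableAt.differentiableWithinAt
  · exact fun z hz => (hderiv z hz).deriv ▸ hp z (Ioo_subset_Icc_self hz)

theorem mul_sub_le_sub_sInf_or (hf : ∀ x ∈ Icc u v, HasDerivWithinAt f (f' x) (Icc u v) x)
    (hf' : ContinuousOn f' (Icc u v)) (hp : ∀ x ∈ Icc u v, p ≤ |f' x|) :
    (∀ s ∈ Icc u v, p * (s - u) ≤ f s - sInf (f '' Icc u v)) ∨
      ∀ s ∈ Icc u v, p * (v - s) ≤ f s - sInf (f '' Icc u v) := by
  have hm : ∀ s ∈ Icc u v, sInf (f '' Icc u v) ≤ f s :=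
    fun s hs => ContinuousOn.sInf_image_Icc_le (fun x hx => (hf x hx).continuousWithinAt) hs
  by_cases hinc : ∀ x ∈ Icc u v, 0 ≤ f' x
  · refine .inl fun s hs => ?_
    have hu : u ∈ Icc u v := ⟨le_rfl, hs.1.trans hs.2⟩
    have := mul_sub_le_sub_of_le_hasDerivWithinAt hf
      (fun x hx => (hp x hx).trans_eq (abs_of_nonneg (hinc x hx))) hu hs hs.1
    linarith [hm u hu]
  by_cases hdec : ∀ x ∈ Icc u v, f' x ≤ 0
  · refine .inr fun s hs => ?_
    have hv : v ∈ Icc u v := ⟨hs.1.trans hs.2, le_rfl⟩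
    have := mul_sub_le_sub_of_le_hasDerivWithinAt (f := fun x => -f x)
      (fun x hx => (hf x hx).neg) (fun x hx => (hp x hx).trans_eq (abs_of_nonpos (hdec x hx)))
      hs hv hs.2
    linarith [hm v hv]
  push Not at hinc hdec
  obtain ⟨x, hx, hx0⟩ := hinc
  obtain ⟨y, hy, hy0⟩ := hdec
  have hxy : uIcc x y ⊆ Icc u v := uIcc_subset_Icc hx hy
  obtain ⟨z, hz, hz0⟩ :=
    intermediate_value_uIcc (hf'.mono hxy) (mem_uIcc.2 (Or.inl ⟨hx0.le, hy0.le⟩))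
  have hp0 : p ≤ 0 := by simpa [hz0] using hp z (hxy hz)
  exact .inl fun s hs =>
    (mul_nonpos_of_nonpos_of_nonneg hp0 (sub_nonneg.2 hs.1)).trans (sub_nonneg.2 (hm s hs))

theorem mul_sq_le_two_mul_integral_sub_sInf (huv : u ≤ v)
    (hf : ∀ x ∈ Icc u v, HasDerivWithinAt f (f' x) (Icc u v) x)
    (hf' : ContinuousOn f' (Icc u v)) (hp : ∀ x ∈ Icc u v, p ≤ |f' x|) :
    p * (v - u) ^ 2 ≤ 2 * ∫ s in u..v, (f s - sInf (f '' Icc u v)) := by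
  set m := sInf (f '' Icc u v)
  have hfc : ContinuousOn f (Icc u v) := fun x hx => (hf x hx).continuousWithinAt
  have of_le : ∀ φ : ℝ → ℝ, Continuous φ → ∫ s in u..v, φ s = p * (v - u) ^ 2 / 2 →
      (∀ s ∈ Icc u v, φ s ≤ f s - m) → p * (v - u) ^ 2 ≤ 2 * ∫ s in u..v, (f s - m) := by
    intro φ hφ hφint hφle
    have : ∫ s in u..v, φ s ≤ ∫ s in u..v, (f s - m) :=
      intervalIntegral.integral_mono_on huv (hφ.intervalIntegrable u v)
        ((hfc.sub continuousOn_const).intervalIntegrable_of_Icc huv) hφle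
    linarith
  rcases mul_sub_le_sub_sInf_or hf hf' hp with hle | hle
  · refine of_le _ (by fun_prop) ?_ hle
    simp only [intervalIntegral.integral_const_mul,
      intervalIntegral.integral_comp_sub_right fun x => x, integral_id]
    ring
  · refine of_le _ (by fun_prop) ?_ hle
    simp only [intervalIntegral.integral_const_mul,
      intervalIntegral.integral_comp_sub_left fun x => x, integral_id]
    ring

theorem mul_mul_sq_le_two_mul_lowerGap (huv : u ≤ v)
    (hf : ∀ x ∈ Icc u v, HasDerivWithinAt f (f' x) (Icc u v) x)
    (hf' : ContinuousOn f' (Icc u v)) (hg' : ContinuousOn g' (Icc u v))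
    (hp : ∀ x ∈ Icc u v, p ≤ |f' x|) (hq0 : 0 ≤ q)
    (hq : ∀ x ∈ Icc u v, q ≤ g' x) :
    p * q * (v - u) ^ 2 ≤ 2 * lowerGap f g' u v := by
  have hfc : ContinuousOn f (Icc u v) := fun x hx => (hf x hx).continuousWithinAt
  set m := sInf (f '' Icc u v)
  calc p * q * (v - u) ^ 2 = q * (p * (v - u) ^ 2) := by ring
    _ ≤ q * (2 * ∫ s in u..v, (f s - m)) :=
      mul_le_mul_of_nonneg_left (mul_sq_le_two_mul_integral_sub_sInf huv hf hf' hp) hq0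
    _ = 2 * ∫ s in u..v, (f s - m) * q := by
      rw [intervalIntegral.integral_mul_const]; ring
    _ ≤ 2 * lowerGap f g' u v := by
      gcongr
      exact intervalIntegral.integral_mono_on huv
        (((hfc.sub continuousOn_const).mul continuousOn_const).intervalIntegrable_of_Icc huv)
        (((hfc.sub continuousOn_const).mul hg').intervalIntegrable_of_Icc huv)
        fun s hs => mul_le_mul_of_nonneg_left (hq s hs) (sub_nonneg.2 (hfc.sInf_image_Icc_le hs))

theorem integral_sqrt_le_of_forall_le_add (huv : u ≤ v)
    (hf : ∀ x ∈ Icc u v, HasDerivWithinAt f (f' x) (Icc u v) x)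
    (hf' : ContinuousOn f' (Icc u v)) (hg' : ContinuousOn g' (Icc u v))
    (hg'0 : ∀ x ∈ Icc u v, 0 ≤ g' x)
    (hclose : ∀ s ∈ Icc u v, ∀ x ∈ Icc u v, ∀ y ∈ Icc u v,
      √(|f' s| * g' s) ≤ √(|f' x| * g' y) + c) :
    ∫ s in u..v, √(|f' s| * g' s) ≤ √(2 * lowerGap f g' u v) + c * (v - u) := by
  obtain ⟨x, hx, hxmin⟩ := isCompact_Icc.exists_isMinOn (nonempty_Icc.2 huv) hf'.abs
  obtain ⟨y, hy, hymin⟩ := isCompact_Icc.exists_isMinOn (nonempty_Icc.2 huv) hg'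
  have hgap := mul_mul_sq_le_two_mul_lowerGap huv hf hf' hg'
    (fun z hz => isMinOn_iff.1 hxmin z hz) (hg'0 y hy) (fun z hz => isMinOn_iff.1 hymin z hz)
  calc ∫ s in u..v, √(|f' s| * g' s)
      ≤ ∫ _ in u..v, (√(|f' x| * g' y) + c) :=
        intervalIntegral.integral_mono_on huv
          ((hf'.abs.mul hg').sqrt.intervalIntegrable_of_Icc huv)
          intervalIntegrable_const fun s hs => hclose s hs x hx y hy
    _ = √(|f' x| * g' y * (v - u) ^ 2) + c * (v - u) := by
      rw [intervalIntegral.integral_const, smul_eq_mul,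
        Real.sqrt_mul (mul_nonneg (abs_nonneg _) (hg'0 y hy)), Real.sqrt_sq (sub_nonneg.2 huv)]
      ring
    _ ≤ √(2 * lowerGap f g' u v) + c * (v - u) := by gcongr

theorem sum_lowerGap_le {w : ℕ → ℝ} {N : ℕ} (hw : MonotoneOn w (Iic N))
    (hf : ContinuousOn f (Icc (w 0) (w N))) (hg' : ContinuousOn g' (Icc (w 0) (w N)))
    (hg'0 : ∀ x ∈ Icc (w 0) (w N), 0 ≤ g' x) :
    ∑ i ∈ Finset.range N, lowerGap f g' (w i) (w (i + 1)) ≤ lowerGap f g' (w 0) (w N) := by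
  set m := sInf (f '' Icc (w 0) (w N))
  have hcell := fun i (hi : i < N) => Icc_subset_Icc_of_monotoneOn_Iic hw hi
  have hle : ∀ i < N, w i ≤ w (i + 1) := fun i hi =>
    hw (mem_Iic.2 hi.le) (mem_Iic.2 hi) i.le_succ
  have hint : ∀ {φ : ℝ → ℝ}, ContinuousOn φ (Icc (w 0) (w N)) →
      ∀ i < N, IntervalIntegrable φ volume (w i) (w (i + 1)) := fun hφ i hi =>
    (hφ.mono (hcell i hi)).intervalIntegrable_of_Icc (hle i hi)
  have hφ : ContinuousOn (fun s => (f s - m) * g' s) (Icc (w 0) (w N)) :=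
    (hf.sub continuousOn_const).mul hg'
  rw [lowerGap, ← intervalIntegral.sum_integral_adjacent_intervals (hint hφ)]
  refine Finset.sum_le_sum fun i hi => ?_
  have hi := Finset.mem_range.1 hi
  have hmi : m ≤ sInf (f '' Icc (w i) (w (i + 1))) :=
    csInf_le_csInf (isCompact_Icc.image_of_continuousOn hf).bddBelow
      ((nonempty_Icc.2 (hle i hi)).image f) (image_mono (hcell i hi))
  refine intervalIntegral.integral_mono_on (hle i hi)
    (hint ((hf.sub continuousOn_const).mul hg') i hi) (hint hφ i hi) fun s hs => ?_
  exact mul_le_mul_of_nonneg_right (by linarith) (hg'0 s (hcell i hi hs))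

theorem exists_pos_forall_sqrt_mul_le_add (hf' : ContinuousOn f' (Icc a b))
    (hg' : ContinuousOn g' (Icc a b)) (hc : 0 < c) :
    ∃ η > 0, ∀ s ∈ Icc a b, ∀ x ∈ Icc a b, ∀ y ∈ Icc a b, |s - x| ≤ η → |s - y| ≤ η →
      √(|f' s| * g' s) ≤ √(|f' x| * g' y) + c := by
  have hH : ContinuousOn (fun z : ℝ × ℝ => √(|f' z.1| * g' z.2)) (Icc a b ×ˢ Icc a b) :=
    ((hf'.comp continuousOn_fst fun _ hz => hz.1).abs.mul
      (hg'.comp continuousOn_snd fun _ hz => hz.2)).sqrt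
  obtain ⟨ε, hε, hH⟩ := Metric.uniformContinuousOn_iff.1
    ((isCompact_Icc.prod isCompact_Icc).uniformContinuousOn_of_continuous hH) c hc
  refine ⟨ε / 2, half_pos hε, fun s hs x hx y hy hsx hsy => ?_⟩
  have hdist : dist (s, s) (x, y) < ε := by
    rw [Prod.dist_eq, Real.dist_eq, Real.dist_eq]
    exact max_lt (by linarith) (by linarith)
  have := hH (s, s) ⟨hs, hs⟩ (x, y) ⟨hx, hy⟩ hdist
  rw [Real.dist_eq] at this
  linarith [le_abs_self (√(|f' s| * g' s) - √(|f' x| * g' y))]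

theorem integral_sqrt_le_sqrt_ceil_mul_add {η : ℝ}
    (hf : ∀ x ∈ Icc a b, HasDerivWithinAt f (f' x) (Icc a b) x)
    (hf' : ContinuousOn f' (Icc a b)) (hg' : ContinuousOn g' (Icc a b))
    (hg'0 : ∀ x ∈ Icc a b, 0 ≤ g' x) (hη : 0 < η)
    (hclose : ∀ s ∈ Icc a b, ∀ x ∈ Icc a b, ∀ y ∈ Icc a b, |s - x| ≤ η → |s - y| ≤ η →
      √(|f' s| * g' s) ≤ √(|f' x| * g' y) + c)
    (huv : u < v) (hsub : Icc u v ⊆ Icc a b) :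
    ∫ s in u..v, √(|f' s| * g' s) ≤
      √(⌈(v - u) / η⌉₊ : ℝ) * √(2 * lowerGap f g' u v) + c * (v - u) := by
  have hfc : ContinuousOn f (Icc a b) := fun x hx => (hf x hx).continuousWithinAt
  obtain ⟨w, hw, hw0, hwK, hwη⟩ := exists_monotone_partition_ceil huv hη
  set K := ⌈(v - u) / η⌉₊
  have hcell : ∀ j < K, Icc (w j) (w (j + 1)) ⊆ Icc a b := fun j hj => by
    have := Icc_subset_Icc_of_monotoneOn_Iic (hw.monotoneOn (Iic K)) hj
    rw [hw0, hwK] at this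
    exact this.trans hsub
  have hlen : ∀ j, ∀ s ∈ Icc (w j) (w (j + 1)), ∀ x ∈ Icc (w j) (w (j + 1)), |s - x| ≤ η :=
    fun j s hs x hx => abs_sub_le_iff.2
      ⟨by linarith [hs.2, hx.1, hwη j], by linarith [hs.1, hx.2, hwη j]⟩
  have hpieces := integral_le_sqrt_sum_mul_sqrt_sum_add (w := w) (N := K) (c := c)
    (k := fun _ => 1) (e := fun j => 2 * lowerGap f g' (w j) (w (j + 1)))
    (fun j hj => ((hf'.abs.mul hg').sqrt.mono (hcell j hj)).intervalIntegrable_of_Icc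
      (hw j.le_succ))
    (fun _ _ => zero_le_one)
    (fun j hj => mul_nonneg zero_le_two (lowerGap_nonneg (hw j.le_succ)
      (hfc.mono (hcell j hj)) fun x hx => hg'0 x (hcell j hj hx)))
    fun j hj => by
      rw [Real.sqrt_one, one_mul]
      exact integral_sqrt_le_of_forall_le_add (hw j.le_succ)
        (fun x hx => (hf x (hcell j hj hx)).mono (hcell j hj)) (hf'.mono (hcell j hj))
        (hg'.mono (hcell j hj)) (fun x hx => hg'0 x (hcell j hj hx))
        fun s hs x hx y hy => hclose s (hcell j hj hs) x (hcell j hj hx) y (hcell j hj hy)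
          (hlen j s hs x hx) (hlen j s hs y hy)
  have hgaps := sum_lowerGap_le (f := f) (g' := g') (hw.monotoneOn (Iic K))
  rw [hw0, hwK] at hpieces hgaps
  refine hpieces.trans ?_
  rw [Finset.sum_const, Finset.card_range, nsmul_one, ← Finset.mul_sum]
  gcongr
  exact hgaps (hfc.mono hsub) (hg'.mono hsub) fun x hx => hg'0 x (hsub hx)

theorem sum_lowerGap_eq {t : ℕ → ℝ} {n : ℕ} (ht : MonotoneOn t (Iic n))
    (hf : ContinuousOn f (Icc (t 0) (t n)))
    (hg : ∀ x ∈ Icc (t 0) (t n), HasDerivWithinAt g (g' x) (Icc (t 0) (t n)) x)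
    (hg' : ContinuousOn g' (Icc (t 0) (t n))) :
    ∑ i ∈ Finset.range n, lowerGap f g' (t i) (t (i + 1)) = (∫ s in t 0..t n, f s * g' s) -
      ∑ i ∈ Finset.range n, sInf (f '' Icc (t i) (t (i + 1))) * (g (t (i + 1)) - g (t i)) := by
  have hcell := fun i (hi : i < n) => Icc_subset_Icc_of_monotoneOn_Iic ht hi
  have hle : ∀ i < n, t i ≤ t (i + 1) := fun i hi =>
    ht (mem_Iic.2 hi.le) (mem_Iic.2 hi) i.le_succ
  rw [← intervalIntegral.sum_integral_adjacent_intervals (f := fun s => f s * g' s) fun i hi =>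
      ((hf.mul hg').mono (hcell i hi)).intervalIntegrable_of_Icc (hle i hi),
    ← Finset.sum_sub_distrib]
  refine Finset.sum_congr rfl fun i hi => ?_
  have hi := Finset.mem_range.1 hi
  exact lowerGap_eq_integral_sub_sInf_mul (hle i hi) (hf.mono (hcell i hi))
    (fun x hx => (hg x (hcell i hi hx)).mono (hcell i hi)) (hg'.mono (hcell i hi))

theorem integral_sqrt_le_sqrt_add_div_mul_add {t : ℕ → ℝ} {n : ℕ} {η : ℝ}
    (hf : ∀ x ∈ Icc (t 0) (t n), HasDerivWithinAt f (f' x) (Icc (t 0) (t n)) x)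
    (hf' : ContinuousOn f' (Icc (t 0) (t n))) (hg' : ContinuousOn g' (Icc (t 0) (t n)))
    (hg'0 : ∀ x ∈ Icc (t 0) (t n), 0 ≤ g' x) (hη : 0 < η)
    (hclose : ∀ s ∈ Icc (t 0) (t n), ∀ x ∈ Icc (t 0) (t n), ∀ y ∈ Icc (t 0) (t n),
      |s - x| ≤ η → |s - y| ≤ η → √(|f' s| * g' s) ≤ √(|f' x| * g' y) + c)
    (ht : ∀ i < n, t i < t (i + 1)) :
    ∫ s in t 0..t n, √(|f' s| * g' s) ≤
      √(n + (t n - t 0) / η) * √(2 * ∑ i ∈ Finset.range n, lowerGap f g' (t i) (t (i + 1))) +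
        c * (t n - t 0) := by
  have hfc : ContinuousOn f (Icc (t 0) (t n)) := fun x hx => (hf x hx).continuousWithinAt
  have hcell := fun i (hi : i < n) =>
    Icc_subset_Icc_of_monotoneOn_Iic (strictMonoOn_Iic_of_lt_succ ht).monotoneOn hi
  refine (integral_le_sqrt_sum_mul_sqrt_sum_add (w := t) (N := n)
    (k := fun i => (⌈(t (i + 1) - t i) / η⌉₊ : ℝ))
    (e := fun i => 2 * lowerGap f g' (t i) (t (i + 1)))
    (fun i hi => ((hf'.abs.mul hg').sqrt.mono (hcell i hi)).intervalIntegrable_of_Icc (ht i hi).le)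
    (fun _ _ => Nat.cast_nonneg _)
    (fun i hi => mul_nonneg zero_le_two
      (lowerGap_nonneg (ht i hi).le (hfc.mono (hcell i hi)) fun x hx => hg'0 x (hcell i hi hx)))
    fun i hi => integral_sqrt_le_sqrt_ceil_mul_add hf hf' hg' hg'0 hη hclose (ht i hi)
      (hcell i hi)).trans ?_
  rw [← Finset.mul_sum]
  gcongr
  exact sum_ceil_sub_div_le hη fun i hi => (ht i hi).le

end

theorem uniform_lower_estimate_general
    (a b : ℝ) (hab : a < b) (f g f' g' : ℝ → ℝ)
    (hf : ∀ t ∈ Set.Icc a b, HasDerivWithinAt f (f' t) (Set.Icc a b) t)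
    (hf' : ContinuousOn f' (Set.Icc a b))
    (hg : ∀ t ∈ Set.Icc a b, HasDerivWithinAt g (g' t) (Set.Icc a b) t)
    (hg' : ContinuousOn g' (Set.Icc a b))
    (hgpos : ∀ t ∈ Set.Icc a b, 0 < g' t)
    (δ : ℝ) (hδ : 0 < δ) :
    ∃ r : ℕ, 0 < r ∧ ∀ n : ℕ, 0 < n → ∀ t : ℕ → ℝ,
      t 0 = a → t n = b → (∀ i < n, t i < t (i + 1)) →
      Real.sqrt ((n : ℝ) + r) *
        Real.sqrt ((∫ s in a..b, f s * g' s) -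
          ∑ i ∈ Finset.range n,
            sInf (f '' Set.Icc (t i) (t (i + 1))) * (g (t (i + 1)) - g (t i))) ≥
        (1 / Real.sqrt 2) * (∫ s in a..b, Real.sqrt (|f' s| * g' s)) - δ * (b - a) := by
  obtain ⟨η, hη, hclose⟩ := exists_pos_forall_sqrt_mul_le_add hf' hg'
    (mul_pos (Real.sqrt_pos.2 two_pos) hδ)
  refine ⟨⌈(b - a) / η⌉₊, Nat.ceil_pos.2 (div_pos (sub_pos.2 hab) hη),
    fun n _ t ht0 htn ht => ?_⟩
  subst ht0 htn
  rw [← sum_lowerGap_eq (strictMonoOn_Iic_of_lt_succ ht).monotoneOn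
    (fun x hx => (hf x hx).continuousWithinAt) hg hg', ge_iff_le, sub_le_iff_le_add, one_div,
    inv_mul_le_iff₀ (Real.sqrt_pos.2 two_pos)]
  set S := ∑ i ∈ Finset.range n, lowerGap f g' (t i) (t (i + 1))
  calc ∫ s in t 0..t n, √(|f' s| * g' s)
      ≤ √(n + (t n - t 0) / η) * √(2 * S) + √2 * δ * (t n - t 0) :=
        integral_sqrt_le_sqrt_add_div_mul_add hf hf' hg' (fun x hx => (hgpos x hx).le) hη
          hclose ht
    _ ≤ √(n + ⌈(t n - t 0) / η⌉₊) * (√2 * √S) + √2 * δ * (t n - t 0) := by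
        rw [Real.sqrt_mul zero_le_two]
        grw [Nat.le_ceil ((t n - t 0) / η)]
    _ = √2 * (√(n + ⌈(t n - t 0) / η⌉₊) * √S + δ * (t n - t 0)) := by ring

/-- Uniform lower estimate: for every `δ > 0` there is `r` such that for every `n`-partition `Δ`,
`√(n+r) · √(∫f dg − LS(Δ)) ≥ (1/√2)∫√(|f'|g') − δ(b−a)`. -/
theorem uniform_lower_estimate
    (a b : ℝ) (hab : a < b) (f g f' g' : ℝ → ℝ)
    (hf : ∀ t ∈ Set.Icc a b, HasDerivWithinAt f (f' t) (Set.Icc a b) t)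
    (hf' : ContinuousOn f' (Set.Icc a b))
    (hzeros : {t ∈ Set.Icc a b | f' t = 0}.Finite)
    (hg : ∀ t ∈ Set.Icc a b, HasDerivWithinAt g (g' t) (Set.Icc a b) t)
    (hg' : ContinuousOn g' (Set.Icc a b))
    (hgpos : ∀ t ∈ Set.Icc a b, 0 < g' t)
    (δ : ℝ) (hδ : 0 < δ) :
    ∃ r : ℕ, 0 < r ∧ ∀ n : ℕ, 0 < n → ∀ t : ℕ → ℝ,
      t 0 = a → t n = b → (∀ i < n, t i < t (i + 1)) →
      Real.sqrt ((n : ℝ) + r) *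
        Real.sqrt ((∫ s in a..b, f s * g' s) -
          ∑ i ∈ Finset.range n,
            sInf (f '' Set.Icc (t i) (t (i + 1))) * (g (t (i + 1)) - g (t i))) ≥
        (1 / Real.sqrt 2) * (∫ s in a..b, Real.sqrt (|f' s| * g' s)) - δ * (b - a) :=
  uniform_lower_estimate_general a b hab f g f' g' hf hf' hg hg' hgpos δ hδ
end

section
/- Let f : [a,b] → ℝ be continuous and g ∈ C¹[a,b] with g' > 0. Let LS_opt(n) be the maximal lower Riemann–Stieltjes sum of f with respect to g over n-point partitions. Then LS_opt(n) → ∫ₐᵇ f(t) g'(t) dt as n → ∞. -/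
/-- The maximal lower Riemann–Stieltjes sum of `f` w.r.t. `g` over `n`-point partitions of `[a,b]`. -/
noncomputable def LSopt (a b : ℝ) (f g : ℝ → ℝ) (n : ℕ) : ℝ :=
  sSup {S : ℝ | ∃ t : ℕ → ℝ, t 0 = a ∧ t n = b ∧ (∀ i < n, t i < t (i + 1)) ∧
    S = ∑ i ∈ Finset.range n,
      sInf (f '' Set.Icc (t i) (t (i + 1))) * (g (t (i + 1)) - g (t i))}

/-!
On a piece `[c, d]` of a partition, `g' ≥ 0` and `∫ c..d, g' = g d - g c` squeeze
`∫ c..d, f * g'` between `(min f) (g d - g c)` and `(min f + osc f) (g d - g c)`. Summing over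
the pieces, every lower sum is at most the integral, while for the uniform partition into `n`
pieces the uniform continuity of `f` makes the oscillation at most `ε` on every piece once `n` is
large, so that lower sum is within `ε (g b - g a)` of the integral.
-/

open Set Filter MeasureTheory intervalIntegral

section Subinterval

variable {f g g' : ℝ → ℝ} {s : Set ℝ} {c d m : ℝ}

theorem integral_eq_sub_of_hasDerivWithinAt_of_Icc_subset (hcd : c ≤ d) (hs : Icc c d ⊆ s)
    (hg : ∀ x ∈ s, HasDerivWithinAt g (g' x) s x) (hg' : ContinuousOn g' s) :
    ∫ x in c..d, g' x = g d - g c :=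
  integral_eq_sub_of_hasDeriv_right_of_le hcd
    (fun x hx => (hg x (hs hx)).continuousWithinAt.mono hs)
    (fun x hx => ((hg x (hs (Ioo_subset_Icc_self hx))).hasDerivAt
      (mem_of_superset (Icc_mem_nhds hx.1 hx.2) hs)).hasDerivWithinAt)
    ((hg'.mono hs).intervalIntegrable_of_Icc hcd)

theorem mul_sub_le_integral_mul_deriv (hcd : c ≤ d) (hs : Icc c d ⊆ s) (hf : ContinuousOn f s)
    (hg : ∀ x ∈ s, HasDerivWithinAt g (g' x) s x) (hg' : ContinuousOn g' s)
    (hg'_nonneg : ∀ x ∈ s, 0 ≤ g' x) (hm : ∀ x ∈ Icc c d, m ≤ f x) :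
    m * (g d - g c) ≤ ∫ x in c..d, f x * g' x := by
  rw [← integral_eq_sub_of_hasDerivWithinAt_of_Icc_subset hcd hs hg hg',
    ← intervalIntegral.integral_const_mul]
  exact integral_mono_on hcd (((hg'.mono hs).intervalIntegrable_of_Icc hcd).const_mul m)
    (((hf.mul hg').mono hs).intervalIntegrable_of_Icc hcd)
    fun x hx => mul_le_mul_of_nonneg_right (hm x hx) (hg'_nonneg x (hs hx))

theorem integral_mul_deriv_le_mul_sub (hcd : c ≤ d) (hs : Icc c d ⊆ s) (hf : ContinuousOn f s)
    (hg : ∀ x ∈ s, HasDerivWithinAt g (g' x) s x) (hg' : ContinuousOn g' s)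
    (hg'_nonneg : ∀ x ∈ s, 0 ≤ g' x) (hm : ∀ x ∈ Icc c d, f x ≤ m) :
    ∫ x in c..d, f x * g' x ≤ m * (g d - g c) := by
  rw [← integral_eq_sub_of_hasDerivWithinAt_of_Icc_subset hcd hs hg hg',
    ← intervalIntegral.integral_const_mul]
  exact integral_mono_on hcd (((hf.mul hg').mono hs).intervalIntegrable_of_Icc hcd)
    (((hg'.mono hs).intervalIntegrable_of_Icc hcd).const_mul m)
    fun x hx => mul_le_mul_of_nonneg_right (hm x hx) (hg'_nonneg x (hs hx))

theorem sInf_image_Icc_le {x : ℝ} (hf : ContinuousOn f (Icc c d)) (hx : x ∈ Icc c d) :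
    sInf (f '' Icc c d) ≤ f x :=
  csInf_le (isCompact_Icc.image_of_continuousOn hf).bddBelow (mem_image_of_mem f hx)

theorem le_sInf_image_Icc_add {x ε : ℝ} (hcd : c ≤ d) (hf : ContinuousOn f (Icc c d))
    (hε : ∀ x ∈ Icc c d, ∀ y ∈ Icc c d, f x ≤ f y + ε) (hx : x ∈ Icc c d) :
    f x ≤ sInf (f '' Icc c d) + ε := by
  obtain ⟨y, hy, hfy⟩ :=
    (isCompact_Icc.image_of_continuousOn hf).sInf_mem ((nonempty_Icc.2 hcd).image f)
  exact hfy ▸ hε x hx y hy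

end Subinterval

def IsStrictPartition (a b : ℝ) (n : ℕ) (t : ℕ → ℝ) : Prop :=
  t 0 = a ∧ t n = b ∧ ∀ i < n, t i < t (i + 1)

noncomputable def lowerStieltjesSum (f g : ℝ → ℝ) (n : ℕ) (t : ℕ → ℝ) : ℝ :=
  ∑ i ∈ Finset.range n, sInf (f '' Icc (t i) (t (i + 1))) * (g (t (i + 1)) - g (t i))

theorem LSopt_eq_sSup_image (a b : ℝ) (f g : ℝ → ℝ) (n : ℕ) :
    LSopt a b f g n = sSup (lowerStieltjesSum f g n '' {t | IsStrictPartition a b n t}) := by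
  refine congrArg sSup (ext fun S => ⟨?_, ?_⟩)
  · rintro ⟨t, h0, hn, hlt, rfl⟩
    exact ⟨t, ⟨h0, hn, hlt⟩, rfl⟩
  · rintro ⟨t, ⟨h0, hn, hlt⟩, rfl⟩
    exact ⟨t, h0, hn, hlt, rfl⟩

namespace IsStrictPartition

variable {a b : ℝ} {n : ℕ} {t : ℕ → ℝ}

theorem mem_Icc (ht : IsStrictPartition a b n t) {i : ℕ} (hi : i ≤ n) : t i ∈ Icc a b := by
  obtain ⟨h0, hn, hlt⟩ := ht
  have hmono : MonotoneOn t (Set.Iic n) :=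
    (strictMonoOn_Iic_of_lt_succ fun m hm => by
      simpa only [Order.succ_eq_add_one] using hlt m hm).monotoneOn
  exact ⟨h0 ▸ hmono (Nat.zero_le n) hi (Nat.zero_le i), hn ▸ hmono hi (mem_Iic.2 le_rfl) hi⟩

theorem le (ht : IsStrictPartition a b n t) : a ≤ b :=
  nonempty_Icc.1 ⟨_, ht.mem_Icc (Nat.zero_le n)⟩

theorem Icc_subset (ht : IsStrictPartition a b n t) {i : ℕ} (hi : i < n) :
    Icc (t i) (t (i + 1)) ⊆ Icc a b :=
  Icc_subset_Icc (ht.mem_Icc hi.le).1 (ht.mem_Icc hi).2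

theorem sum_integral {F : ℝ → ℝ} (ht : IsStrictPartition a b n t)
    (hF : IntervalIntegrable F volume a b) :
    ∑ i ∈ Finset.range n, ∫ x in t i..t (i + 1), F x = ∫ x in a..b, F x := by
  rw [sum_integral_adjacent_intervals fun i hi => hF.mono_set (uIcc_subset_uIcc
    (Icc_subset_uIcc (ht.mem_Icc hi.le)) (Icc_subset_uIcc (ht.mem_Icc hi))), ht.1, ht.2.1]

theorem sum_sub {g : ℝ → ℝ} (ht : IsStrictPartition a b n t) :
    ∑ i ∈ Finset.range n, (g (t (i + 1)) - g (t i)) = g b - g a := by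
  rw [Finset.sum_range_sub (fun i => g (t i)), ht.1, ht.2.1]

variable {f g g' : ℝ → ℝ}

theorem lowerStieltjesSum_le_integral (ht : IsStrictPartition a b n t)
    (hf : ContinuousOn f (Icc a b)) (hg : ∀ x ∈ Icc a b, HasDerivWithinAt g (g' x) (Icc a b) x)
    (hg' : ContinuousOn g' (Icc a b)) (hg'_nonneg : ∀ x ∈ Icc a b, 0 ≤ g' x) :
    lowerStieltjesSum f g n t ≤ ∫ x in a..b, f x * g' x := by
  rw [← ht.sum_integral (F := fun x => f x * g' x) ((hf.mul hg').intervalIntegrable_of_Icc ht.le)]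
  refine Finset.sum_le_sum fun i hi => ?_
  have hsub := ht.Icc_subset (Finset.mem_range.1 hi)
  exact mul_sub_le_integral_mul_deriv (ht.2.2 i (Finset.mem_range.1 hi)).le hsub hf hg hg'
    hg'_nonneg fun x hx => sInf_image_Icc_le (hf.mono hsub) hx

theorem integral_le_lowerStieltjesSum_add {δ ε : ℝ} (ht : IsStrictPartition a b n t)
    (hf : ContinuousOn f (Icc a b)) (hg : ∀ x ∈ Icc a b, HasDerivWithinAt g (g' x) (Icc a b) x)
    (hg' : ContinuousOn g' (Icc a b)) (hg'_nonneg : ∀ x ∈ Icc a b, 0 ≤ g' x)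
    (hmesh : ∀ i < n, t (i + 1) - t i < δ)
    (hδ : ∀ x ∈ Icc a b, ∀ y ∈ Icc a b, dist x y < δ → dist (f x) (f y) < ε) :
    ∫ x in a..b, f x * g' x ≤ lowerStieltjesSum f g n t + ε * (g b - g a) := by
  rw [← ht.sum_integral (F := fun x => f x * g' x) ((hf.mul hg').intervalIntegrable_of_Icc ht.le),
    ← ht.sum_sub, Finset.mul_sum, lowerStieltjesSum, ← Finset.sum_add_distrib]
  refine Finset.sum_le_sum fun i hi => ?_
  have hsub := ht.Icc_subset (Finset.mem_range.1 hi)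
  have hti := (ht.2.2 i (Finset.mem_range.1 hi)).le
  have hosc : ∀ x ∈ Icc (t i) (t (i + 1)), ∀ y ∈ Icc (t i) (t (i + 1)), f x ≤ f y + ε :=
    fun x hx y hy => by
      have := hδ x (hsub hx) y (hsub hy)
        ((Real.dist_le_of_mem_Icc hx hy).trans_lt (hmesh i (Finset.mem_range.1 hi)))
      linarith [(abs_sub_lt_iff.1 (Real.dist_eq _ _ ▸ this)).1]
  rw [← add_mul]
  exact integral_mul_deriv_le_mul_sub hti hsub hf hg hg' hg'_nonneg
    fun x hx => le_sInf_image_Icc_add hti (hf.mono hsub) hosc hx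

end IsStrictPartition

noncomputable def uniformPartition (a b : ℝ) (n : ℕ) (i : ℕ) : ℝ :=
  a + i * ((b - a) / n)

theorem uniformPartition_succ_sub (a b : ℝ) (n i : ℕ) :
    uniformPartition a b n (i + 1) - uniformPartition a b n i = (b - a) / n := by
  simp only [uniformPartition]
  push_cast
  ring

theorem isStrictPartition_uniformPartition {a b : ℝ} {n : ℕ} (hab : a < b) (hn : n ≠ 0) :
    IsStrictPartition a b n (uniformPartition a b n) := by
  refine ⟨by simp [uniformPartition], ?_, fun i _ => ?_⟩
  · rw [uniformPartition, mul_div_cancel₀ _ (Nat.cast_ne_zero.2 hn)]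
    ring
  · rw [← sub_pos, uniformPartition_succ_sub]
    exact div_pos (sub_pos.2 hab) (Nat.cast_pos.2 (Nat.pos_of_ne_zero hn))

section LSopt

variable {a b : ℝ} {f g g' : ℝ → ℝ}

-- For `n = 0` there is no partition and `LSopt a b f g 0 = sSup ∅ = 0`.
theorem LSopt_le_integral {n : ℕ} (hab : a < b) (hn : n ≠ 0) (hf : ContinuousOn f (Icc a b))
    (hg : ∀ x ∈ Icc a b, HasDerivWithinAt g (g' x) (Icc a b) x)
    (hg' : ContinuousOn g' (Icc a b)) (hg'_nonneg : ∀ x ∈ Icc a b, 0 ≤ g' x) :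
    LSopt a b f g n ≤ ∫ x in a..b, f x * g' x := by
  rw [LSopt_eq_sSup_image]
  exact csSup_le ⟨_, mem_image_of_mem _ (isStrictPartition_uniformPartition hab hn)⟩
    (forall_mem_image.2 fun t ht => ht.lowerStieltjesSum_le_integral hf hg hg' hg'_nonneg)

theorem IsStrictPartition.lowerStieltjesSum_le_LSopt {n : ℕ} {t : ℕ → ℝ}
    (ht : IsStrictPartition a b n t) (hf : ContinuousOn f (Icc a b))
    (hg : ∀ x ∈ Icc a b, HasDerivWithinAt g (g' x) (Icc a b) x)
    (hg' : ContinuousOn g' (Icc a b)) (hg'_nonneg : ∀ x ∈ Icc a b, 0 ≤ g' x) :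
    lowerStieltjesSum f g n t ≤ LSopt a b f g n := by
  rw [LSopt_eq_sSup_image]
  refine le_csSup ⟨∫ x in a..b, f x * g' x, forall_mem_image.2 fun s hs => ?_⟩
    (mem_image_of_mem _ ht)
  exact hs.lowerStieltjesSum_le_integral hf hg hg' hg'_nonneg

theorem eventually_integral_sub_le_LSopt {ε : ℝ} (hab : a < b) (hε : 0 < ε)
    (hf : ContinuousOn f (Icc a b)) (hg : ∀ x ∈ Icc a b, HasDerivWithinAt g (g' x) (Icc a b) x)
    (hg' : ContinuousOn g' (Icc a b)) (hg'_nonneg : ∀ x ∈ Icc a b, 0 ≤ g' x) :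
    ∀ᶠ n in atTop, (∫ x in a..b, f x * g' x) - ε * (g b - g a) ≤ LSopt a b f g n := by
  obtain ⟨δ, hδ, hfδ⟩ := Metric.uniformContinuousOn_iff.1
    (isCompact_Icc.uniformContinuousOn_of_continuous hf) ε hε
  obtain ⟨N, hN⟩ := exists_nat_gt ((b - a) / δ)
  filter_upwards [eventually_gt_atTop N] with n hn
  have hn0 : n ≠ 0 := by omega
  have ht := isStrictPartition_uniformPartition hab hn0
  have hmesh : (b - a) / n < δ :=
    (div_lt_comm₀ (Nat.cast_pos.2 (Nat.pos_of_ne_zero hn0)) hδ).2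
      (hN.trans (Nat.cast_lt.2 hn))
  have := ht.integral_le_lowerStieltjesSum_add hf hg hg' hg'_nonneg
    (fun i _ => (uniformPartition_succ_sub a b n i).trans_lt hmesh) hfδ
  linarith [ht.lowerStieltjesSum_le_LSopt hf hg hg' hg'_nonneg]

end LSopt

/-- The optimal lower Riemann–Stieltjes sums converge to the integral. -/
theorem LSopt_tendsto_integral
    (a b : ℝ) (hab : a < b) (f g g' : ℝ → ℝ)
    (hf : ContinuousOn f (Set.Icc a b))
    (hg : ∀ t ∈ Set.Icc a b, HasDerivWithinAt g (g' t) (Set.Icc a b) t)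
    (hg' : ContinuousOn g' (Set.Icc a b))
    (hgpos : ∀ t ∈ Set.Icc a b, 0 < g' t) :
    Filter.Tendsto (fun n : ℕ => LSopt a b f g n) Filter.atTop
      (nhds (∫ t in a..b, f t * g' t)) := by
  have hg'_nonneg : ∀ t ∈ Icc a b, 0 ≤ g' t := fun t ht => (hgpos t ht).le
  refine tendsto_order.2 ⟨fun l hl => ?_, fun u hu => ?_⟩
  · obtain ⟨ε, hε, hεl⟩ := exists_pos_mul_lt (sub_pos.2 hl) (g b - g a)
    filter_upwards [eventually_integral_sub_le_LSopt hab hε hf hg hg' hg'_nonneg] with n hn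
    linarith
  · filter_upwards [eventually_ne_atTop 0] with n hn
    exact (LSopt_le_integral hab hn hf hg hg' hg'_nonneg).trans_lt hu
end
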